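/- arXiv:2304.14934 — 3 statements merged into one kernel-verified Lean document; each statement's English description precedes it below -/
import Mathlib

section
/- Any 3SS scheme for the domain S = {000, 010, 100, 101} ⊆ {0,1}³ satisfies |M_x| ≥ 8 for some x ∈ S, where M_x is the set of share triples occurring with positive probability on input x. Consequently ρ(S) ≥ 3. -/
open scoped Classical

/-- A distribution scheme: a distribution `pR` on a finite randomness set `R`
and a map producing three shares from a secret and the randomness. -/
structure Scheme (X A B C R : Type) [Fintype R] where
  pR : R → ℝ
  nonneg : ∀ r, 0 ≤ pR r
  sum_one : ∑ r, pR r = 1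
  share : X → R → A × B × C

/-- Party `P₁`'s view: `(W₁₂, W₃₁)`. -/
def view1 {A B C : Type} (w : A × B × C) : A × C := (w.1, w.2.2)
/-- Party `P₂`'s view: `(W₂₃, W₁₂)`. -/
def view2 {A B C : Type} (w : A × B × C) : B × A := (w.2.1, w.1)
/-- Party `P₃`'s view: `(W₃₁, W₂₃)`. -/
def view3 {A B C : Type} (w : A × B × C) : C × B := (w.2.2, w.2.1)

/-- Probability that party `P₁`'s pair of shares equals `v`, given the secret `x`. -/
noncomputable def probV1 {X A B C R : Type} [Fintype R] (sch : Scheme X A B C R)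
    (x : X) (v : A × C) : ℝ :=
  ∑ r, if view1 (sch.share x r) = v then sch.pR r else 0

/-- Probability that party `P₂`'s pair of shares equals `v`, given the secret `x`. -/
noncomputable def probV2 {X A B C R : Type} [Fintype R] (sch : Scheme X A B C R)
    (x : X) (v : B × A) : ℝ :=
  ∑ r, if view2 (sch.share x r) = v then sch.pR r else 0

/-- Probability that party `P₃`'s pair of shares equals `v`, given the secret `x`. -/
noncomputable def probV3 {X A B C R : Type} [Fintype R] (sch : Scheme X A B C R)
    (x : X) (v : C × B) : ℝ :=
  ∑ r, if view3 (sch.share x r) = v then sch.pR r else 0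

/-- A distribution scheme is a 3SS scheme for domain `S`:
perfect correctness (each party reconstructs its secret coordinate from its
pair of shares) and perfect privacy (the distribution of party `Pᵢ`'s pair of
shares depends on the secret vector only through coordinate `i`). -/
def Is3SS {X1 X2 X3 A B C R : Type} [Fintype R] (S : Set (X1 × X2 × X3))
    (sch : Scheme (X1 × X2 × X3) A B C R) : Prop :=
  (∃ φ1 : A × C → X1, ∀ x ∈ S, ∀ r, 0 < sch.pR r → φ1 (view1 (sch.share x r)) = x.1) ∧
  (∃ φ2 : B × A → X2, ∀ x ∈ S, ∀ r, 0 < sch.pR r → φ2 (view2 (sch.share x r)) = x.2.1) ∧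
  (∃ φ3 : C × B → X3, ∀ x ∈ S, ∀ r, 0 < sch.pR r → φ3 (view3 (sch.share x r)) = x.2.2) ∧
  (∀ x ∈ S, ∀ x' ∈ S, x.1 = x'.1 → ∀ v, probV1 sch x v = probV1 sch x' v) ∧
  (∀ x ∈ S, ∀ x' ∈ S, x.2.1 = x'.2.1 → ∀ v, probV2 sch x v = probV2 sch x' v) ∧
  (∀ x ∈ S, ∀ x' ∈ S, x.2.2 = x'.2.2 → ∀ v, probV3 sch x v = probV3 sch x' v)

/-- The randomness complexity `ρ(S)`: the infimum of `log₂ |R|` over all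
3SS schemes for domain `S`. -/
noncomputable def rho {X1 X2 X3 : Type} (S : Set (X1 × X2 × X3)) : ℝ :=
  sInf { t : ℝ | ∃ (n : ℕ) (A B C : Type) (sch : Scheme (X1 × X2 × X3) A B C (Fin n)),
    Is3SS S sch ∧ t = Real.logb 2 n }

/-- Probability that the share triple equals `w`, given the secret `x`. -/
noncomputable def probW {X A B C R : Type} [Fintype R] (sch : Scheme X A B C R)
    (x : X) (w : A × B × C) : ℝ :=
  ∑ r, if sch.share x r = w then sch.pR r else 0

/-- `M_x`: the set of share triples occurring with positive probability on input `x`. -/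
def Msupp {X A B C R : Type} [Fintype R] (sch : Scheme X A B C R) (x : X) :
    Set (A × B × C) :=
  {w | 0 < probW sch x w}

/-- The domain `S = {000, 010, 100, 101}` (family 14). -/
def S6 : Set (Bool × Bool × Bool) :=
  {(false, false, false), (false, true, false), (true, false, false), (true, false, true)}

-- ######################  auxiliary machinery  ######################

section Aux

lemma sum_ite_pos_iff {R : Type} [Fintype R] (p : R → ℝ) (h0 : ∀ r, 0 ≤ p r)
    (P : R → Prop) [DecidablePred P] :
    (0 < ∑ r, if P r then p r else 0) ↔ ∃ r, P r ∧ 0 < p r := by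
  constructor
  · intro h
    by_contra hc
    push_neg at hc
    have hz : ∀ r ∈ Finset.univ, (if P r then p r else 0) = 0 := by
      intro r _
      by_cases hP : P r
      · simp only [hP, if_true]
        exact le_antisymm (hc r hP) (h0 r)
      · simp [hP]
    rw [Finset.sum_eq_zero hz] at h
    exact lt_irrefl 0 h
  · rintro ⟨r, hP, hp⟩
    refine Finset.sum_pos' (fun i _ => ?_) ⟨r, Finset.mem_univ r, by simp [hP, hp]⟩
    by_cases h : P i <;> simp [h, h0 i]

def oct {X : Type} (x0 x1 x2 x3 x4 x5 x6 x7 : X) : Bool × Bool × Bool → X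
  | (false, false, false) => x0
  | (false, false, true) => x1
  | (false, true, false) => x2
  | (false, true, true) => x3
  | (true, false, false) => x4
  | (true, false, true) => x5
  | (true, true, false) => x6
  | (true, true, true) => x7

def qsel {K : Type} (y0 y1 y2 y3 : K) : Bool → Bool → K
  | false, false => y0
  | false, true => y1
  | true, false => y2
  | true, true => y3

lemma inj_oct {X K : Type} (g : X → K) (F : Bool × Bool × Bool → X) (ksel : Bool → Bool → K)
    (hk : ∀ i j k, g (F (i, j, k)) = ksel j k)
    (hksel : ∀ j k j' k', ksel j k = ksel j' k' → j = j' ∧ k = k')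
    (hi : ∀ j k, F (false, j, k) ≠ F (true, j, k)) : Function.Injective F := by
  rintro ⟨i, j, k⟩ ⟨i', j', k'⟩ h
  obtain ⟨rfl, rfl⟩ := hksel j k j' k' (by rw [← hk i j k, ← hk i' j' k', h])
  cases i <;> cases i'
  · rfl
  · exact absurd h (hi j k)
  · exact absurd h.symm (hi j k)
  · rfl

lemma eight_le_ncard {X : Type} {M : Set X} (hfin : M.Finite)
    (F : Bool × Bool × Bool → X) (hmem : ∀ p, F p ∈ M) (hinj : Function.Injective F) :
    8 ≤ M.ncard := by
  have h1 : (Set.range F).ncard = 8 := by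
    rw [← Set.image_univ, Set.ncard_image_of_injective _ hinj, Set.ncard_univ]
    simp [Nat.card_eq_fintype_card]
  calc (8 : ℕ) = (Set.range F).ncard := h1.symm
    _ ≤ M.ncard := Set.ncard_le_ncard (Set.range_subset_iff.mpr hmem) hfin

section exch
variable {A B C : Type} {M M' : Set (A × B × C)}

lemma exch1 (E : ∀ w ∈ M, ∃ w' ∈ M', view1 w' = view1 w)
    {a b c} (h : (a, b, c) ∈ M) : ∃ b', (a, b', c) ∈ M' := by
  obtain ⟨⟨x, y, z⟩, hm, hv⟩ := E _ h
  simp only [view1, Prod.mk.injEq] at hv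
  rw [hv.1, hv.2] at hm
  exact ⟨y, hm⟩

lemma exch2 (E : ∀ w ∈ M, ∃ w' ∈ M', view2 w' = view2 w)
    {a b c} (h : (a, b, c) ∈ M) : ∃ c', (a, b, c') ∈ M' := by
  obtain ⟨⟨x, y, z⟩, hm, hv⟩ := E _ h
  simp only [view2, Prod.mk.injEq] at hv
  rw [hv.1, hv.2] at hm
  exact ⟨z, hm⟩

lemma exch3 (E : ∀ w ∈ M, ∃ w' ∈ M', view3 w' = view3 w)
    {a b c} (h : (a, b, c) ∈ M) : ∃ a', (a', b, c) ∈ M' := by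
  obtain ⟨⟨x, y, z⟩, hm, hv⟩ := E _ h
  simp only [view3, Prod.mk.injEq] at hv
  rw [hv.1, hv.2] at hm
  exact ⟨x, hm⟩

end exch

/-- Main combinatorial lemma on supports. -/
lemma key_comb {A B C : Type}
    (M000 M010 M100 M101 : Set (A × B × C))
    (φ1 : A × C → Bool) (φ2 : B × A → Bool) (φ3 : C × B → Bool)
    (h1_000 : ∀ w ∈ M000, φ1 (view1 w) = false)
    (h1_100 : ∀ w ∈ M100, φ1 (view1 w) = true)
    (h2_000 : ∀ w ∈ M000, φ2 (view2 w) = false)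
    (h2_010 : ∀ w ∈ M010, φ2 (view2 w) = true)
    (h2_101 : ∀ w ∈ M101, φ2 (view2 w) = false)
    (h3_000 : ∀ w ∈ M000, φ3 (view3 w) = false)
    (h3_010 : ∀ w ∈ M010, φ3 (view3 w) = false)
    (h3_100 : ∀ w ∈ M100, φ3 (view3 w) = false)
    (h3_101 : ∀ w ∈ M101, φ3 (view3 w) = true)
    (E1a : ∀ w ∈ M101, ∃ w' ∈ M100, view1 w' = view1 w)
    (E1b : ∀ w ∈ M000, ∃ w' ∈ M010, view1 w' = view1 w)
    (E1c : ∀ w ∈ M100, ∃ w' ∈ M101, view1 w' = view1 w)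
    (E2a : ∀ w ∈ M101, ∃ w' ∈ M000, view2 w' = view2 w)
    (E2b : ∀ w ∈ M000, ∃ w' ∈ M100, view2 w' = view2 w)
    (E3a : ∀ w ∈ M100, ∃ w' ∈ M000, view3 w' = view3 w)
    (E3b : ∀ w ∈ M010, ∃ w' ∈ M000, view3 w' = view3 w)
    (E3c : ∀ w ∈ M000, ∃ w' ∈ M100, view3 w' = view3 w)
    (hne : M101.Nonempty)
    (hfin000 : M000.Finite) (hfin100 : M100.Finite) :
    8 ≤ M000.ncard ∨ 8 ≤ M100.ncard := by
  obtain ⟨⟨a0, b0, c0⟩, hw0⟩ := hne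
  obtain ⟨b1, hs1⟩ := exch1 E1a hw0        -- (a0, b1, c0) ∈ M100
  have hb1b0 : b1 ≠ b0 := by
    intro h
    have f1 : φ3 (c0, b1) = false := h3_100 _ hs1
    have f2 : φ3 (c0, b0) = true := h3_101 _ hw0
    rw [h, f2] at f1; exact Bool.noConfusion f1
  obtain ⟨a1, hs2⟩ := exch3 E3a hs1        -- (a1, b1, c0) ∈ M000
  obtain ⟨b2, hs3⟩ := exch1 E1b hs2        -- (a1, b2, c0) ∈ M010
  have hb2b1 : b2 ≠ b1 := by
    intro h
    have f1 : φ2 (b2, a1) = true := h2_010 _ hs3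
    have f2 : φ2 (b1, a1) = false := h2_000 _ hs2
    rw [h, f2] at f1; exact Bool.noConfusion f1
  have hb2b0 : b2 ≠ b0 := by
    intro h
    have f1 : φ3 (c0, b2) = false := h3_010 _ hs3
    have f2 : φ3 (c0, b0) = true := h3_101 _ hw0
    rw [h, f2] at f1; exact Bool.noConfusion f1
  by_cases hBc : ∃ a b c, (a, b, c) ∈ M000 ∧ b ≠ b0 ∧ b ≠ b1 ∧ b ≠ b2
  · -- Case A
    right
    obtain ⟨a3, b3, c3, hwb3, hb3b0, hb3b1, hb3b2⟩ := hBc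
    obtain ⟨cβ, hwb0⟩ := exch2 E2a hw0      -- (a0, b0, cβ) ∈ M000
    obtain ⟨a2, hwb2⟩ := exch3 E3b hs3      -- (a2, b2, c0) ∈ M000
    have mk : ∀ a b c, (a, b, c) ∈ M000 →
        ∃ a' c'', (a, b, c'') ∈ M100 ∧ (a', b, c) ∈ M100 ∧ (a, b, c'') ≠ (a', b, c) := by
      intro a b c hm
      obtain ⟨cx, hm1⟩ := exch2 E2b hm
      obtain ⟨ay, hm2⟩ := exch3 E3c hm
      refine ⟨ay, cx, hm1, hm2, ?_⟩
      intro h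
      rw [Prod.mk.injEq, Prod.mk.injEq] at h
      obtain ⟨h1, -, h3⟩ := h
      have f1 : φ1 (a, cx) = true := h1_100 _ hm1
      have f0 : φ1 (a, c) = false := h1_000 _ hm
      rw [h3, f0] at f1; exact Bool.noConfusion f1
    obtain ⟨A0, C0, hP00, hP01, hP0ne⟩ := mk _ _ _ hwb0
    obtain ⟨A1, C1, hP10, hP11, hP1ne⟩ := mk _ _ _ hs2
    obtain ⟨A2, C2, hP20, hP21, hP2ne⟩ := mk _ _ _ hwb2
    obtain ⟨A3, C3, hP30, hP31, hP3ne⟩ := mk _ _ _ hwb3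
    refine eight_le_ncard hfin100
      (oct (a0, b0, C0) (a1, b1, C1) (a2, b2, C2) (a3, b3, C3)
           (A0, b0, cβ) (A1, b1, c0) (A2, b2, c0) (A3, b3, c3)) ?_ ?_
    · rintro ⟨(_|_), (_|_), (_|_)⟩ <;>
        first
        | exact hP00 | exact hP10 | exact hP20 | exact hP30
        | exact hP01 | exact hP11 | exact hP21 | exact hP31
    · refine inj_oct (fun w => w.2.1) _ (qsel b0 b1 b2 b3) ?_ ?_ ?_
      · rintro (_|_) (_|_) (_|_) <;> rfl
      · rintro (_|_) (_|_) (_|_) (_|_) h <;> simp only [qsel] at h <;>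
          first
          | exact ⟨rfl, rfl⟩
          | exact absurd h hb1b0 | exact absurd h.symm hb1b0
          | exact absurd h hb2b0 | exact absurd h.symm hb2b0
          | exact absurd h hb2b1 | exact absurd h.symm hb2b1
          | exact absurd h hb3b0 | exact absurd h.symm hb3b0
          | exact absurd h hb3b1 | exact absurd h.symm hb3b1
          | exact absurd h hb3b2 | exact absurd h.symm hb3b2
      · rintro (_|_) (_|_) <;>
          first
          | exact hP0ne | exact hP1ne | exact hP2ne | exact hP3ne
  · push_neg at hBc
    have hT : ∀ a b c, (a, b, c) ∈ M000 → b = b0 ∨ b = b1 ∨ b = b2 := by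
      intro a b c hm
      by_cases h1 : b = b0
      · exact Or.inl h1
      by_cases h2 : b = b1
      · exact Or.inr (Or.inl h2)
      exact Or.inr (Or.inr (hBc a b c hm h1 h2))
    -- Case B
    left
    obtain ⟨c1, ht2⟩ := exch2 E2b hs2        -- (a1, b1, c1) ∈ M100
    obtain ⟨bx, ht3⟩ := exch1 E1c ht2        -- (a1, bx, c1) ∈ M101
    obtain ⟨c4, ht4⟩ := exch2 E2a ht3        -- (a1, bx, c4) ∈ M000
    have hbx : bx = b0 := by
      rcases hT _ _ _ ht4 with h | h | h
      · exact h
      · exfalso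
        have f1 : φ3 (c1, b1) = false := h3_100 _ ht2
        have f2 : φ3 (c1, bx) = true := h3_101 _ ht3
        rw [h, f1] at f2; exact Bool.noConfusion f2
      · exfalso
        have f1 : φ2 (bx, a1) = false := h2_101 _ ht3
        have f2 : φ2 (b2, a1) = true := h2_010 _ hs3
        rw [h, f2] at f1; exact Bool.noConfusion f1
    subst hbx
    obtain ⟨c5, ht5⟩ := exch2 E2b ht4        -- (a1, bx, c5) ∈ M100
    obtain ⟨a4, hwC⟩ := exch3 E3a ht2        -- (a4, b1, c1) ∈ M000
    obtain ⟨a5, hwD⟩ := exch3 E3a ht5        -- (a5, bx, c5) ∈ M000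
    -- pattern facts
    have p1A : φ1 (a1, c0) = false := h1_000 _ hs2
    have p1B : φ1 (a1, c4) = false := h1_000 _ ht4
    have p1C : φ1 (a1, c1) = true := h1_100 _ ht2
    have p1D : φ1 (a1, c5) = true := h1_100 _ ht5
    have p3A : φ3 (c0, bx) = true := h3_101 _ hw0
    have p3B : φ3 (c4, bx) = false := h3_000 _ ht4
    have p3C : φ3 (c1, bx) = true := h3_101 _ ht3
    have p3D : φ3 (c5, bx) = false := h3_100 _ ht5
    have neAB : c0 ≠ c4 := fun h => by rw [h, p3B] at p3A; exact Bool.noConfusion p3A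
    have neAC : c0 ≠ c1 := fun h => by rw [h, p1C] at p1A; exact Bool.noConfusion p1A
    have neAD : c0 ≠ c5 := fun h => by rw [h, p1D] at p1A; exact Bool.noConfusion p1A
    have neBC : c4 ≠ c1 := fun h => by rw [h, p1C] at p1B; exact Bool.noConfusion p1B
    have neBD : c4 ≠ c5 := fun h => by rw [h, p1D] at p1B; exact Bool.noConfusion p1B
    have neCD : c1 ≠ c5 := fun h => by rw [h, p3D] at p3C; exact Bool.noConfusion p3C
    have mkB : ∀ a b c, (a, b, c) ∈ M000 → ∃ a' b', (a', b', c) ∈ M000 ∧ a' ≠ a := by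
      intro a b c hm
      obtain ⟨bu, hu⟩ := exch1 E1b hm        -- (a, bu, c) ∈ M010
      obtain ⟨av, hvm⟩ := exch3 E3b hu       -- (av, bu, c) ∈ M000
      refine ⟨av, bu, hvm, ?_⟩
      intro h
      have f1 : φ2 (bu, av) = false := h2_000 _ hvm
      have f2 : φ2 (bu, a) = true := h2_010 _ hu
      rw [h, f2] at f1; exact Bool.noConfusion f1
    obtain ⟨aA, bA, hmA, haA⟩ := mkB _ _ _ hs2
    obtain ⟨aB, bB, hmB, haB⟩ := mkB _ _ _ ht4
    obtain ⟨aC, bC, hmC, haC⟩ := mkB _ _ _ hwC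
    obtain ⟨aD, bD, hmD, haD⟩ := mkB _ _ _ hwD
    refine eight_le_ncard hfin000
      (oct (a1, b1, c0) (a1, bx, c4) (a4, b1, c1) (a5, bx, c5)
           (aA, bA, c0) (aB, bB, c4) (aC, bC, c1) (aD, bD, c5)) ?_ ?_
    · rintro ⟨(_|_), (_|_), (_|_)⟩ <;>
        first
        | exact hs2 | exact ht4 | exact hwC | exact hwD
        | exact hmA | exact hmB | exact hmC | exact hmD
    · refine inj_oct (fun w => w.2.2) _ (qsel c0 c4 c1 c5) ?_ ?_ ?_
      · rintro (_|_) (_|_) (_|_) <;> rfl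
      · rintro (_|_) (_|_) (_|_) (_|_) h <;> simp only [qsel] at h <;>
          first
          | exact ⟨rfl, rfl⟩
          | exact absurd h neAB | exact absurd h.symm neAB
          | exact absurd h neAC | exact absurd h.symm neAC
          | exact absurd h neAD | exact absurd h.symm neAD
          | exact absurd h neBC | exact absurd h.symm neBC
          | exact absurd h neBD | exact absurd h.symm neBD
          | exact absurd h neCD | exact absurd h.symm neCD
      · rintro (_|_) (_|_) <;> intro h <;>
          rw [Prod.mk.injEq, Prod.mk.injEq] at h <;>
          first
          | exact haA h.1.symm | exact haB h.1.symm | exact haC h.1.symm | exact haD h.1.symm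

-- ############## bridge from schemes to supports ##############

section bridge
variable {X A B C R : Type} [Fintype R] (sch : Scheme X A B C R)

lemma mem_Msupp {x : X} {w : A × B × C} :
    w ∈ Msupp sch x ↔ ∃ r, sch.share x r = w ∧ 0 < sch.pR r := by
  rw [Msupp, Set.mem_setOf_eq, probW, sum_ite_pos_iff sch.pR sch.nonneg]

lemma Msupp_finite (x : X) : (Msupp sch x).Finite := by
  apply (Set.finite_range (sch.share x)).subset
  intro w hw
  obtain ⟨r, hr, -⟩ := (mem_Msupp sch).mp hw
  exact ⟨r, hr⟩

lemma Msupp_nonempty (x : X) : (Msupp sch x).Nonempty := by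
  have h : ∃ r, 0 < sch.pR r := by
    by_contra hc
    push_neg at hc
    have hz : ∀ r ∈ Finset.univ, sch.pR r = 0 :=
      fun r _ => le_antisymm (hc r) (sch.nonneg r)
    have h1 := sch.sum_one
    rw [Finset.sum_eq_zero hz] at h1
    norm_num at h1
  obtain ⟨r, hr⟩ := h
  exact ⟨sch.share x r, (mem_Msupp sch).mpr ⟨r, rfl, hr⟩⟩

lemma exch_of_priv1 {x x' : X}
    (hpriv : ∀ v, probV1 sch x v = probV1 sch x' v) :
    ∀ w ∈ Msupp sch x, ∃ w' ∈ Msupp sch x', view1 w' = view1 w := by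
  intro w hw
  obtain ⟨r, hshare, hpos⟩ := (mem_Msupp sch).mp hw
  have h1 : 0 < probV1 sch x (view1 w) := by
    rw [probV1, sum_ite_pos_iff sch.pR sch.nonneg]
    exact ⟨r, by rw [hshare], hpos⟩
  rw [hpriv] at h1
  rw [probV1, sum_ite_pos_iff sch.pR sch.nonneg] at h1
  obtain ⟨r', hv, hp⟩ := h1
  exact ⟨sch.share x' r', (mem_Msupp sch).mpr ⟨r', rfl, hp⟩, hv⟩

lemma exch_of_priv2 {x x' : X}
    (hpriv : ∀ v, probV2 sch x v = probV2 sch x' v) :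
    ∀ w ∈ Msupp sch x, ∃ w' ∈ Msupp sch x', view2 w' = view2 w := by
  intro w hw
  obtain ⟨r, hshare, hpos⟩ := (mem_Msupp sch).mp hw
  have h1 : 0 < probV2 sch x (view2 w) := by
    rw [probV2, sum_ite_pos_iff sch.pR sch.nonneg]
    exact ⟨r, by rw [hshare], hpos⟩
  rw [hpriv] at h1
  rw [probV2, sum_ite_pos_iff sch.pR sch.nonneg] at h1
  obtain ⟨r', hv, hp⟩ := h1
  exact ⟨sch.share x' r', (mem_Msupp sch).mpr ⟨r', rfl, hp⟩, hv⟩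

lemma exch_of_priv3 {x x' : X}
    (hpriv : ∀ v, probV3 sch x v = probV3 sch x' v) :
    ∀ w ∈ Msupp sch x, ∃ w' ∈ Msupp sch x', view3 w' = view3 w := by
  intro w hw
  obtain ⟨r, hshare, hpos⟩ := (mem_Msupp sch).mp hw
  have h1 : 0 < probV3 sch x (view3 w) := by
    rw [probV3, sum_ite_pos_iff sch.pR sch.nonneg]
    exact ⟨r, by rw [hshare], hpos⟩
  rw [hpriv] at h1
  rw [probV3, sum_ite_pos_iff sch.pR sch.nonneg] at h1
  obtain ⟨r', hv, hp⟩ := h1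
  exact ⟨sch.share x' r', (mem_Msupp sch).mpr ⟨r', rfl, hp⟩, hv⟩

end bridge

-- ############## an explicit 3SS scheme for S6 ##############

def maskF (d p : Bool × Bool × Bool) : Bool × Bool × Bool :=
  (xor p.1 d.1, xor p.2.1 d.2.1, xor p.2.2 d.2.2)

lemma maskF_invol (d p : Bool × Bool × Bool) : maskF d (maskF d p) = p := by
  obtain ⟨d1, d2, d3⟩ := d
  obtain ⟨p1, p2, p3⟩ := p
  revert d1 d2 d3 p1 p2 p3
  decide

def maskEquiv (d : Bool × Bool × Bool) : (Bool × Bool × Bool) ≃ (Bool × Bool × Bool) where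
  toFun := maskF d
  invFun := maskF d
  left_inv p := maskF_invol d p
  right_inv p := maskF_invol d p

noncomputable def e8 : Fin 8 ≃ Bool × Bool × Bool :=
  Fintype.equivOfCardEq (by simp)

noncomputable def schemeS6 :
    Scheme (Bool × Bool × Bool) (Bool × Bool) (Bool × Bool) (Bool × Bool) (Fin 8) where
  pR := fun _ => (8 : ℝ)⁻¹
  nonneg := fun _ => by norm_num
  sum_one := by
    rw [Finset.sum_const, Finset.card_univ, Fintype.card_fin, nsmul_eq_mul]
    norm_num
  share := fun x r =>
    ((xor x.1 (e8 r).1, xor x.2.1 (e8 r).2.1),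
     ((e8 r).2.1, (e8 r).2.2),
     ((e8 r).1, xor x.2.2 (e8 r).2.2))

noncomputable def sig (d : Bool × Bool × Bool) : Fin 8 ≃ Fin 8 :=
  e8.trans ((maskEquiv d).trans e8.symm)

lemma sig_apply (d : Bool × Bool × Bool) (r : Fin 8) :
    e8 (sig d r) = maskF d (e8 r) := by
  simp [sig, maskEquiv, Equiv.trans_apply, Equiv.apply_symm_apply]

lemma mask1_eq (x1 x2 x3 x2' x3' r1 r2 r3 : Bool) :
    ((xor x1 (xor r1 false), xor x2' (xor r2 (xor x2 x2'))),
      (xor r1 false, xor x3' (xor r3 (xor x3 x3'))))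
      = ((xor x1 r1, xor x2 r2), (r1, xor x3 r3)) := by
  revert x1 x2 x3 x2' x3' r1 r2 r3; decide

lemma mask2_eq (x1 x2 x1' r1 r2 r3 : Bool) :
    ((xor r2 false, xor r3 false),
      (xor x1' (xor r1 (xor x1 x1')), xor x2 (xor r2 false)))
      = ((r2, r3), (xor x1 r1, xor x2 r2)) := by
  revert x1 x2 x1' r1 r2 r3; decide

lemma mask3_eq (x3 r1 r2 r3 : Bool) :
    ((xor r1 false, xor x3 (xor r3 false)),
      (xor r2 false, xor r3 false))
      = ((r1, xor x3 r3), (r2, r3)) := by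
  revert x3 r1 r2 r3; decide

section comp
variable {X A B C R : Type} [Fintype R] (sch : Scheme X A B C R)

lemma probV1_comp (σ : R ≃ R) (hp : ∀ r, sch.pR (σ r) = sch.pR r) {x x' : X}
    (hv : ∀ r, view1 (sch.share x' (σ r)) = view1 (sch.share x r)) (v : A × C) :
    probV1 sch x v = probV1 sch x' v := by
  rw [probV1, probV1,
    ← Equiv.sum_comp σ (fun r => if view1 (sch.share x' r) = v then sch.pR r else 0)]
  apply Finset.sum_congr rfl
  intro r _
  rw [hv r, hp r]

lemma probV2_comp (σ : R ≃ R) (hp : ∀ r, sch.pR (σ r) = sch.pR r) {x x' : X}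
    (hv : ∀ r, view2 (sch.share x' (σ r)) = view2 (sch.share x r)) (v : B × A) :
    probV2 sch x v = probV2 sch x' v := by
  rw [probV2, probV2,
    ← Equiv.sum_comp σ (fun r => if view2 (sch.share x' r) = v then sch.pR r else 0)]
  apply Finset.sum_congr rfl
  intro r _
  rw [hv r, hp r]

lemma probV3_comp (σ : R ≃ R) (hp : ∀ r, sch.pR (σ r) = sch.pR r) {x x' : X}
    (hv : ∀ r, view3 (sch.share x' (σ r)) = view3 (sch.share x r)) (v : C × B) :
    probV3 sch x v = probV3 sch x' v := by
  rw [probV3, probV3,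
    ← Equiv.sum_comp σ (fun r => if view3 (sch.share x' r) = v then sch.pR r else 0)]
  apply Finset.sum_congr rfl
  intro r _
  rw [hv r, hp r]

end comp

lemma schemeS6_priv1 (x x' : Bool × Bool × Bool) (h : x.1 = x'.1)
    (v : (Bool × Bool) × Bool × Bool) :
    probV1 schemeS6 x v = probV1 schemeS6 x' v := by
  obtain ⟨x1, x2, x3⟩ := x
  obtain ⟨x1', x2', x3'⟩ := x'
  simp only at h
  subst h
  have key : ∀ r, view1 (schemeS6.share (x1, x2', x3') (sig (false, xor x2 x2', xor x3 x3') r)) =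
      view1 (schemeS6.share (x1, x2, x3) r) := by
    intro r
    simp only [schemeS6, view1]
    rw [sig_apply]
    exact mask1_eq x1 x2 x3 x2' x3' (e8 r).1 (e8 r).2.1 (e8 r).2.2
  exact probV1_comp schemeS6 (sig (false, xor x2 x2', xor x3 x3')) (fun _ => rfl) key v

lemma schemeS6_priv2 (x x' : Bool × Bool × Bool) (h : x.2.1 = x'.2.1)
    (v : (Bool × Bool) × Bool × Bool) :
    probV2 schemeS6 x v = probV2 schemeS6 x' v := by
  obtain ⟨x1, x2, x3⟩ := x
  obtain ⟨x1', x2', x3'⟩ := x'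
  simp only at h
  subst h
  have key : ∀ r, view2 (schemeS6.share (x1', x2, x3') (sig (xor x1 x1', false, false) r)) =
      view2 (schemeS6.share (x1, x2, x3) r) := by
    intro r
    simp only [schemeS6, view2]
    rw [sig_apply]
    exact mask2_eq x1 x2 x1' (e8 r).1 (e8 r).2.1 (e8 r).2.2
  exact probV2_comp schemeS6 (sig (xor x1 x1', false, false)) (fun _ => rfl) key v

lemma schemeS6_priv3 (x x' : Bool × Bool × Bool) (h : x.2.2 = x'.2.2)
    (v : (Bool × Bool) × Bool × Bool) :
    probV3 schemeS6 x v = probV3 schemeS6 x' v := by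
  obtain ⟨x1, x2, x3⟩ := x
  obtain ⟨x1', x2', x3'⟩ := x'
  simp only at h
  subst h
  have key : ∀ r, view3 (schemeS6.share (x1', x2', x3) (sig (false, false, false) r)) =
      view3 (schemeS6.share (x1, x2, x3) r) := by
    intro r
    simp only [schemeS6, view3]
    rw [sig_apply]
    exact mask3_eq x3 (e8 r).1 (e8 r).2.1 (e8 r).2.2
  exact probV3_comp schemeS6 (sig (false, false, false)) (fun _ => rfl) key v

lemma xorxor (a b : Bool) : xor (xor a b) b = a := by revert a b; decide

lemma schemeS6_is3SS : Is3SS S6 schemeS6 := by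
  refine ⟨⟨fun v => xor v.1.1 v.2.1, ?_⟩, ⟨fun v => xor v.2.2 v.1.1, ?_⟩,
    ⟨fun v => xor v.1.2 v.2.2, ?_⟩, ?_, ?_, ?_⟩
  · rintro ⟨x1, x2, x3⟩ - r -
    exact xorxor x1 (e8 r).1
  · rintro ⟨x1, x2, x3⟩ - r -
    exact xorxor x2 (e8 r).2.1
  · rintro ⟨x1, x2, x3⟩ - r -
    exact xorxor x3 (e8 r).2.2
  · exact fun x _ x' _ h v => schemeS6_priv1 x x' h v
  · exact fun x _ x' _ h v => schemeS6_priv2 x x' h v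
  · exact fun x _ x' _ h v => schemeS6_priv3 x x' h v

-- membership facts for S6
lemma mS000 : ((false, false, false) : Bool × Bool × Bool) ∈ S6 := by left; rfl
lemma mS010 : ((false, true, false) : Bool × Bool × Bool) ∈ S6 := by right; left; rfl
lemma mS100 : ((true, false, false) : Bool × Bool × Bool) ∈ S6 := by right; right; left; rfl
lemma mS101 : ((true, false, true) : Bool × Bool × Bool) ∈ S6 := by right; right; right; rfl

lemma main_bound {A B C R : Type} [Fintype R] (sch : Scheme (Bool × Bool × Bool) A B C R)
    (h : Is3SS S6 sch) : ∃ x ∈ S6, 8 ≤ (Msupp sch x).ncard := by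
  obtain ⟨⟨φ1, hφ1⟩, ⟨φ2, hφ2⟩, ⟨φ3, hφ3⟩, hp1, hp2, hp3⟩ := h
  have corr1 : ∀ x ∈ S6, ∀ w ∈ Msupp sch x, φ1 (view1 w) = x.1 := by
    intro x hx w hw
    obtain ⟨r, hr, hp⟩ := (mem_Msupp sch).mp hw
    rw [← hr]
    exact hφ1 x hx r hp
  have corr2 : ∀ x ∈ S6, ∀ w ∈ Msupp sch x, φ2 (view2 w) = x.2.1 := by
    intro x hx w hw
    obtain ⟨r, hr, hp⟩ := (mem_Msupp sch).mp hw
    rw [← hr]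
    exact hφ2 x hx r hp
  have corr3 : ∀ x ∈ S6, ∀ w ∈ Msupp sch x, φ3 (view3 w) = x.2.2 := by
    intro x hx w hw
    obtain ⟨r, hr, hp⟩ := (mem_Msupp sch).mp hw
    rw [← hr]
    exact hφ3 x hx r hp
  have hkey := key_comb
    (Msupp sch (false, false, false)) (Msupp sch (false, true, false))
    (Msupp sch (true, false, false)) (Msupp sch (true, false, true)) φ1 φ2 φ3
    (corr1 _ mS000) (corr1 _ mS100)
    (corr2 _ mS000) (corr2 _ mS010) (corr2 _ mS101)
    (corr3 _ mS000) (corr3 _ mS010) (corr3 _ mS100) (corr3 _ mS101)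
    (exch_of_priv1 sch (fun v => hp1 _ mS101 _ mS100 rfl v))
    (exch_of_priv1 sch (fun v => hp1 _ mS000 _ mS010 rfl v))
    (exch_of_priv1 sch (fun v => hp1 _ mS100 _ mS101 rfl v))
    (exch_of_priv2 sch (fun v => hp2 _ mS101 _ mS000 rfl v))
    (exch_of_priv2 sch (fun v => hp2 _ mS000 _ mS100 rfl v))
    (exch_of_priv3 sch (fun v => hp3 _ mS100 _ mS000 rfl v))
    (exch_of_priv3 sch (fun v => hp3 _ mS010 _ mS000 rfl v))
    (exch_of_priv3 sch (fun v => hp3 _ mS000 _ mS100 rfl v))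
    (Msupp_nonempty sch _) (Msupp_finite sch _) (Msupp_finite sch _)
  rcases hkey with h8 | h8
  · exact ⟨(false, false, false), mS000, h8⟩
  · exact ⟨(true, false, false), mS100, h8⟩

end Aux

/-- Any 3SS scheme for `S = {000, 010, 100, 101}` has `|M_x| ≥ 8` for some
`x ∈ S`; consequently `ρ(S) ≥ 3`. -/

theorem family14_lower_bound :
    (∀ {A B C R : Type} [Fintype R] (sch : Scheme (Bool × Bool × Bool) A B C R),
      Is3SS S6 sch → ∃ x ∈ S6, 8 ≤ (Msupp sch x).ncard) ∧
    (3 : ℝ) ≤ rho S6 := by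
  constructor
  · intro A B C R _ sch h
    exact main_bound sch h
  · apply le_csInf
    · exact ⟨Real.logb 2 8, 8, _, _, _, schemeS6, schemeS6_is3SS, by norm_num⟩
    · rintro t ⟨n, A, B, C, sch, h3, rfl⟩
      obtain ⟨x, -, h8⟩ := main_bound sch h3
      have hn : 8 ≤ n := by
        have h1 : (Msupp sch x).ncard ≤ (Set.range (sch.share x)).ncard := by
          apply Set.ncard_le_ncard _ (Set.finite_range (sch.share x))
          intro w hw
          obtain ⟨r, hr, -⟩ := (mem_Msupp sch).mp hw
          exact ⟨r, hr⟩
        have h2 : (Set.range (sch.share x)).ncard ≤ n := by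
          rw [← Set.image_univ]
          calc (sch.share x '' Set.univ).ncard ≤ (Set.univ : Set (Fin n)).ncard :=
                Set.ncard_image_le Set.finite_univ
            _ = n := by rw [Set.ncard_univ, Nat.card_eq_fintype_card, Fintype.card_fin]
        omega
      have h38 : (3 : ℝ) = Real.logb 2 8 := by
        rw [show (8 : ℝ) = 2 ^ (3 : ℕ) by norm_num, Real.logb_pow,
          Real.logb_self_eq_one (by norm_num : (1:ℝ) < 2)]
        norm_num
      rw [h38]
      exact Real.logb_le_logb_of_le (by norm_num : (1:ℝ) < 2) (by norm_num)
        (by exact_mod_cast hn)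
end

section
/- In any 3SS scheme for domain S, for every distribution P_X supported on S, the shares satisfy I(W₁₂; W₂₃ | W₃₁) ≥ RI(X₁; X₃), where RI is residual information. -/
open scoped Classical

/-- A probability distribution on a finite sample space `Ω`. -/
structure FinProb (Ω : Type) [Fintype Ω] where
  p : Ω → ℝ
  nonneg : ∀ ω, 0 ≤ p ω
  sum_one : ∑ ω, p ω = 1

variable {Ω : Type} [Fintype Ω]

/-- `P(A = a)` for a random variable `A` on `(Ω, μ)`. -/
noncomputable def prEq {α : Type} (μ : FinProb Ω) (A : Ω → α) (a : α) : ℝ :=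
  ∑ ω, if A ω = a then μ.p ω else 0

/-- Shannon entropy (natural log) of a finite random variable. -/
noncomputable def ent {α : Type} [Fintype α] (μ : FinProb Ω) (A : Ω → α) : ℝ :=
  ∑ a, Real.negMulLog (prEq μ A a)

/-- Conditional entropy `H(A | B)`. -/
noncomputable def condEnt {α β : Type} [Fintype α] [Fintype β]
    (μ : FinProb Ω) (A : Ω → α) (B : Ω → β) : ℝ :=
  ent μ (fun ω => (A ω, B ω)) - ent μ B

/-- Mutual information `I(A ; B)`. -/
noncomputable def mutInf {α β : Type} [Fintype α] [Fintype β]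
    (μ : FinProb Ω) (A : Ω → α) (B : Ω → β) : ℝ :=
  ent μ A + ent μ B - ent μ (fun ω => (A ω, B ω))

/-- Conditional mutual information `I(A ; B | C)`. -/
noncomputable def condMutInf {α β γ : Type} [Fintype α] [Fintype β] [Fintype γ]
    (μ : FinProb Ω) (A : Ω → α) (B : Ω → β) (Cc : Ω → γ) : ℝ :=
  ent μ (fun ω => (A ω, Cc ω)) + ent μ (fun ω => (B ω, Cc ω))
    - ent μ (fun ω => (A ω, B ω, Cc ω)) - ent μ Cc

/-- Gács–Körner common information `CI_GK(A ; B)`: the supremum of `H(Q)` over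
random variables `Q` that are almost surely a deterministic function of `A`
and almost surely a deterministic function of `B`. -/
noncomputable def gkInf {α β : Type} [Fintype α] [Fintype β]
    (μ : FinProb Ω) (A : Ω → α) (B : Ω → β) : ℝ :=
  sSup { h : ℝ | ∃ (n : ℕ) (f : α → Fin n) (g : β → Fin n),
    (∀ ω, 0 < μ.p ω → f (A ω) = g (B ω)) ∧ h = ent μ (fun ω => f (A ω)) }

/-- Residual information `RI(A ; B) = I(A ; B) − CI_GK(A ; B)`. -/
noncomputable def resInf {α β : Type} [Fintype α] [Fintype β]
    (μ : FinProb Ω) (A : Ω → α) (B : Ω → β) : ℝ :=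
  mutInf μ A B - gkInf μ A B


/-! Correctness recovers `X₁` from `(W₁₂, W₃₁)` and `X₃` from `(W₂₃, W₃₁)`, so
`I(W₁₂;W₂₃|W₃₁) ≥ I(X₁;X₃|W₃₁)`, and privacy gives `I(W₃₁;X₁|X₃) = 0`, so that
`I(X₁;X₃|W₃₁) = I(X₁;X₃) - I(X₁;W₃₁)`. It remains to see `I(X₁;W₃₁) ≤ CI_GK(X₁;X₃)`.
Privacy also gives `I(W₃₁;X₃|X₁) = 0`, so `W₃₁ - X₁ - X₃` and `W₃₁ - X₃ - X₁` are both Markov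
chains. Hence the conditional law of `W₃₁` given `X₁ = x` equals that given `X₃ = z` whenever
`(x, z)` has positive probability: this conditional law is a common part of `X₁` and `X₃`, and
as a sufficient statistic of `X₁` for `W₃₁` it carries all of `I(X₁;W₃₁)`. -/

open Real

section Probability

variable {α β τ : Type}

lemma prEq_nonneg (μ : FinProb Ω) (A : Ω → α) (a : α) : 0 ≤ prEq μ A a :=
  Finset.sum_nonneg fun ω _ => by split_ifs <;> simp [μ.nonneg ω]

lemma sum_prEq [Fintype α] (μ : FinProb Ω) (A : Ω → α) : ∑ a, prEq μ A a = 1 := by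
  simp only [prEq]
  rw [Finset.sum_comm]
  simpa using μ.sum_one

lemma prEq_congr (μ : FinProb Ω) {A : Ω → α} {B : Ω → β} {a : α} {b : β}
    (h : ∀ ω, A ω = a ↔ B ω = b) : prEq μ A a = prEq μ B b := by
  simp only [prEq, h]

lemma prEq_eq_zero (μ : FinProb Ω) {A : Ω → α} {a : α} (h : ∀ ω, A ω ≠ a) :
    prEq μ A a = 0 :=
  Finset.sum_eq_zero fun ω _ => if_neg (h ω)

lemma prEq_comp_of_injective (μ : FinProb Ω) {f : α → β} (hf : f.Injective) (A : Ω → α)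
    (a : α) : prEq μ (fun ω => f (A ω)) (f a) = prEq μ A a :=
  prEq_congr μ fun _ => hf.eq_iff

lemma prEq_le_prEq_comp (μ : FinProb Ω) (f : α → β) (A : Ω → α) (a : α) :
    prEq μ A a ≤ prEq μ (fun ω => f (A ω)) (f a) :=
  Finset.sum_le_sum fun ω _ => by
    by_cases h : A ω = a
    · simp [h]
    · split_ifs <;> simp [μ.nonneg ω]

lemma prEq_self_pos (μ : FinProb Ω) (A : Ω → α) {ω : Ω} (hω : 0 < μ.p ω) :
    0 < prEq μ A (A ω) :=
  calc 0 < μ.p ω := hω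
    _ = if A ω = A ω then μ.p ω else 0 := (if_pos rfl).symm
    _ ≤ prEq μ A (A ω) := Finset.single_le_sum (f := fun ω' => if A ω' = A ω then μ.p ω' else 0)
        (fun ω' _ => by split_ifs <;> simp [μ.nonneg ω']) (Finset.mem_univ ω)

lemma prEq_comp_eq_sum [Fintype α] (μ : FinProb Ω) (f : α → β) (A : Ω → α) (b : β) :
    prEq μ (fun ω => f (A ω)) b = ∑ a, if f a = b then prEq μ A a else 0 := by
  simp_rw [prEq, ← Finset.sum_filter (p := fun a => f a = b),
    Finset.sum_comm (s := Finset.univ.filter _)]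
  simp

lemma prEq_pair_comp_eq_sum [Fintype α] [Fintype β] (μ : FinProb Ω) (f : α → τ) (B : Ω → β)
    (A : Ω → α) (b : β) (t : τ) :
    prEq μ (fun ω => (B ω, f (A ω))) (b, t)
      = ∑ a, if f a = t then prEq μ (fun ω => (B ω, A ω)) (b, a) else 0 := by
  rw [prEq_comp_eq_sum μ (fun x : β × α => (x.1, f x.2)) (fun ω => (B ω, A ω)),
    Fintype.sum_prod_type, Finset.sum_comm]
  simp [ite_and]

lemma sum_prEq_pair_left [Fintype α] (μ : FinProb Ω) (A : Ω → α) (C : Ω → β) (c : β) :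
    ∑ a, prEq μ (fun ω => (A ω, C ω)) (a, c) = prEq μ C c := by
  simp only [prEq, Prod.mk.injEq]
  rw [Finset.sum_comm]
  simp [ite_and]

end Probability

section Entropy

variable {α β : Type} [Fintype α] [Fintype β]

lemma ent_comp_of_injective (μ : FinProb Ω) {f : α → β} (hf : f.Injective) (A : Ω → α) :
    ent μ (fun ω => f (A ω)) = ent μ A := by
  refine (Fintype.sum_of_injective f hf _ _ (fun b hb => ?_) fun a => ?_).symm
  · rw [prEq_eq_zero μ fun ω h => hb ⟨A ω, h⟩, negMulLog_zero]
  · rw [prEq_comp_of_injective μ hf]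

lemma ent_comp_eq_sum (μ : FinProb Ω) (f : α → β) (A : Ω → α) :
    ent μ (fun ω => f (A ω))
      = ∑ a, prEq μ A a * -log (prEq μ (fun ω => f (A ω)) (f a)) := by
  simp_rw [ent, negMulLog, neg_mul, ← mul_neg]
  conv_lhs => enter [2, b, 1]; rw [prEq_comp_eq_sum]
  simp_rw [Finset.sum_mul, ite_mul, zero_mul]
  rw [Finset.sum_comm]
  refine Finset.sum_congr rfl fun a _ => ?_
  simp [eq_comm]

end Entropy

section Gibbs

open InformationTheory

lemma mul_log_div_sub_eq_mul_klFun {p q : ℝ} (hq : q ≠ 0) :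
    p * log (p / q) - (p - q) = q * klFun (p / q) := by
  rw [klFun_apply]
  field_simp
  ring

lemma sub_le_mul_log_div {p q : ℝ} (hp : 0 ≤ p) (hq : 0 ≤ q) (hpq : q = 0 → p = 0) :
    p - q ≤ p * log (p / q) := by
  rcases hq.eq_or_lt with rfl | hq
  · simp [hpq rfl]
  rw [← sub_nonneg, mul_log_div_sub_eq_mul_klFun hq.ne']
  exact mul_nonneg hq.le (klFun_nonneg (div_nonneg hp hq.le))

lemma eq_of_mul_log_div_eq_sub {p q : ℝ} (hp : 0 ≤ p) (hq : 0 ≤ q) (hpq : q = 0 → p = 0)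
    (h : p * log (p / q) = p - q) : p = q := by
  rcases hq.eq_or_lt with rfl | hq
  · exact hpq rfl
  rw [← sub_eq_zero, mul_log_div_sub_eq_mul_klFun hq.ne', mul_eq_zero_iff_left hq.ne',
    klFun_eq_zero_iff (div_nonneg hp hq.le), div_eq_one_iff_eq hq.ne'] at h
  exact h

variable {ι : Type} [Fintype ι] {p q : ι → ℝ}

lemma sum_mul_log_div_eq_sum_sub (hsum : ∑ i, q i = ∑ i, p i) :
    ∑ i, p i * log (p i / q i) = ∑ i, (p i * log (p i / q i) - (p i - q i)) := by
  rw [Finset.sum_sub_distrib, Finset.sum_sub_distrib, hsum, sub_self, sub_zero]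

lemma sum_mul_log_div_nonneg (hp : ∀ i, 0 ≤ p i) (hq : ∀ i, 0 ≤ q i)
    (hpq : ∀ i, q i = 0 → p i = 0) (hsum : ∑ i, q i = ∑ i, p i) :
    0 ≤ ∑ i, p i * log (p i / q i) := by
  rw [sum_mul_log_div_eq_sum_sub hsum]
  exact Finset.sum_nonneg fun i _ => sub_nonneg.2 (sub_le_mul_log_div (hp i) (hq i) (hpq i))

lemma eq_of_sum_mul_log_div_eq_zero (hp : ∀ i, 0 ≤ p i) (hq : ∀ i, 0 ≤ q i)
    (hpq : ∀ i, q i = 0 → p i = 0) (hsum : ∑ i, q i = ∑ i, p i)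
    (h : ∑ i, p i * log (p i / q i) = 0) : p = q := by
  rw [sum_mul_log_div_eq_sum_sub hsum, Finset.sum_eq_zero_iff_of_nonneg fun i _ =>
    sub_nonneg.2 (sub_le_mul_log_div (hp i) (hq i) (hpq i))] at h
  exact funext fun i =>
    eq_of_mul_log_div_eq_sub (hp i) (hq i) (hpq i) (sub_eq_zero.1 (h i (Finset.mem_univ i)))

end Gibbs

section ConditionalIndependence

variable {α β γ : Type} (μ : FinProb Ω) (A : Ω → α) (B : Ω → β) (C : Ω → γ)

/-- Where `P(C = c) = 0` the division yields `0`, which is harmless: the numerator vanishes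
there too. -/
noncomputable def condIndepLaw (x : α × β × γ) : ℝ :=
  prEq μ (fun ω => (A ω, C ω)) (x.1, x.2.2) * prEq μ (fun ω => (B ω, C ω)) (x.2.1, x.2.2)
    / prEq μ C x.2.2

lemma condIndepLaw_nonneg (x : α × β × γ) : 0 ≤ condIndepLaw μ A B C x :=
  div_nonneg (mul_nonneg (prEq_nonneg μ _ _) (prEq_nonneg μ _ _)) (prEq_nonneg μ _ _)

lemma prEq_eq_zero_of_condIndepLaw_eq_zero {x : α × β × γ} (hx : condIndepLaw μ A B C x = 0) :
    prEq μ (fun ω => (A ω, B ω, C ω)) x = 0 := by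
  set T := fun ω => (A ω, B ω, C ω)
  have hAC := prEq_le_prEq_comp μ (fun x : α × β × γ => (x.1, x.2.2)) T x
  have hBC := prEq_le_prEq_comp μ (fun x : α × β × γ => (x.2.1, x.2.2)) T x
  have hC := prEq_le_prEq_comp μ (fun x : α × β × γ => x.2.2) T x
  refine le_antisymm ?_ (prEq_nonneg μ T x)
  rcases div_eq_zero_iff.1 hx with h | h
  · rcases mul_eq_zero.1 h with h | h
    · exact hAC.trans h.le
    · exact hBC.trans h.le
  · exact hC.trans h.le

variable [Fintype α] [Fintype β] [Fintype γ]

lemma sum_condIndepLaw : ∑ x, condIndepLaw μ A B C x = 1 := by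
  simp only [condIndepLaw, Fintype.sum_prod_type]
  simp_rw [Finset.sum_comm (s := (Finset.univ : Finset β)) (t := (Finset.univ : Finset γ))]
  rw [Finset.sum_comm, ← sum_prEq μ C]
  refine Finset.sum_congr rfl fun c _ => ?_
  simp_rw [← Finset.sum_div, ← Finset.mul_sum, ← Finset.sum_mul]
  rw [sum_prEq_pair_left, sum_prEq_pair_left, mul_self_div_self]

lemma condMutInf_eq_sum_mul_log_div :
    condMutInf μ A B C = ∑ x, prEq μ (fun ω => (A ω, B ω, C ω)) x
      * log (prEq μ (fun ω => (A ω, B ω, C ω)) x / condIndepLaw μ A B C x) := by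
  set T := fun ω => (A ω, B ω, C ω)
  have hAC := ent_comp_eq_sum μ (fun x : α × β × γ => (x.1, x.2.2)) T
  have hBC := ent_comp_eq_sum μ (fun x : α × β × γ => (x.2.1, x.2.2)) T
  have hC := ent_comp_eq_sum μ (fun x : α × β × γ => x.2.2) T
  have hABC := ent_comp_eq_sum μ id T
  simp only [T, id] at hAC hBC hC hABC
  rw [condMutInf, hAC, hBC, hABC, hC, ← Finset.sum_add_distrib, ← Finset.sum_sub_distrib,
    ← Finset.sum_sub_distrib]
  refine Finset.sum_congr rfl fun x _ => ?_
  rcases (prEq_nonneg μ T x).eq_or_lt with hx | hx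
  · simp [T, ← hx]
  have hAC := hx.trans_le (prEq_le_prEq_comp μ (fun x : α × β × γ => (x.1, x.2.2)) T x)
  have hBC := hx.trans_le (prEq_le_prEq_comp μ (fun x : α × β × γ => (x.2.1, x.2.2)) T x)
  have hC := hx.trans_le (prEq_le_prEq_comp μ (fun x : α × β × γ => x.2.2) T x)
  simp only [T] at hx hAC hBC hC
  rw [condIndepLaw, log_div hx.ne' (by positivity), log_div (by positivity) hC.ne',
    log_mul hAC.ne' hBC.ne']
  ring

lemma condMutInf_nonneg : 0 ≤ condMutInf μ A B C := by
  rw [condMutInf_eq_sum_mul_log_div]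
  exact sum_mul_log_div_nonneg (prEq_nonneg μ _) (condIndepLaw_nonneg μ A B C)
    (fun x => prEq_eq_zero_of_condIndepLaw_eq_zero μ A B C) (by rw [sum_condIndepLaw, sum_prEq])

lemma condMutInf_eq_zero_iff :
    condMutInf μ A B C = 0 ↔ prEq μ (fun ω => (A ω, B ω, C ω)) = condIndepLaw μ A B C := by
  rw [condMutInf_eq_sum_mul_log_div]
  refine ⟨eq_of_sum_mul_log_div_eq_zero (prEq_nonneg μ _) (condIndepLaw_nonneg μ A B C)
    (fun x => prEq_eq_zero_of_condIndepLaw_eq_zero μ A B C)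
    (by rw [sum_condIndepLaw, sum_prEq]), fun h => ?_⟩
  refine Finset.sum_eq_zero fun x _ => ?_
  rcases eq_or_ne (condIndepLaw μ A B C x) 0 with hx | hx <;> simp [h, hx]

end ConditionalIndependence

section Identities

variable {α β γ δ ε : Type} [Fintype α] [Fintype β] [Fintype γ] [Fintype δ] [Fintype ε]
variable (μ : FinProb Ω)

lemma condMutInf_comm (A : Ω → α) (B : Ω → β) (C : Ω → γ) :
    condMutInf μ A B C = condMutInf μ B A C := by
  have h := ent_comp_of_injective μ (f := fun x : α × β × γ => (x.2.1, x.1, x.2.2))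
    (by intro x y h; simp_all [Prod.ext_iff]) (fun ω => (A ω, B ω, C ω))
  simp only [condMutInf] at h ⊢
  rw [h]
  ring

lemma condMutInf_pair_left (A : Ω → α) (A' : Ω → δ) (B : Ω → β) (C : Ω → γ) :
    condMutInf μ (fun ω => (A ω, A' ω)) B C
      = condMutInf μ A' B C + condMutInf μ A B (fun ω => (A' ω, C ω)) := by
  have h₁ := ent_comp_of_injective μ (f := fun x : α × δ × γ => ((x.1, x.2.1), x.2.2))
    (by intro x y h; simp_all [Prod.ext_iff]) (fun ω => (A ω, A' ω, C ω))
  have h₂ := ent_comp_of_injective μ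
    (f := fun x : α × β × δ × γ => ((x.1, x.2.2.1), x.2.1, x.2.2.2))
    (by intro x y h; simp_all [Prod.ext_iff]) (fun ω => (A ω, B ω, A' ω, C ω))
  have h₃ := ent_comp_of_injective μ (f := fun x : β × δ × γ => (x.2.1, x.1, x.2.2))
    (by intro x y h; simp_all [Prod.ext_iff]) (fun ω => (B ω, A' ω, C ω))
  simp only [condMutInf] at h₁ h₂ h₃ ⊢
  rw [h₁, h₂, h₃]
  ring

lemma condMutInf_comp_graph_left (f : α → δ) (A : Ω → α) (B : Ω → β) (C : Ω → γ) :
    condMutInf μ (fun ω => (A ω, f (A ω))) B C = condMutInf μ A B C := by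
  have h₁ := ent_comp_of_injective μ (f := fun x : α × γ => ((x.1, f x.1), x.2))
    (by intro x y h; simp_all [Prod.ext_iff]) (fun ω => (A ω, C ω))
  have h₂ := ent_comp_of_injective μ (f := fun x : α × β × γ => ((x.1, f x.1), x.2))
    (by intro x y h; simp_all [Prod.ext_iff]) (fun ω => (A ω, B ω, C ω))
  simp only [condMutInf] at h₁ h₂ ⊢
  rw [h₁, h₂]

lemma condMutInf_comp_left_le (f : α → δ) (A : Ω → α) (B : Ω → β) (C : Ω → γ) :
    condMutInf μ (fun ω => f (A ω)) B C ≤ condMutInf μ A B C := by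
  rw [← condMutInf_comp_graph_left μ f, condMutInf_pair_left]
  linarith [condMutInf_nonneg μ A B (fun ω => (f (A ω), C ω))]

lemma condMutInf_comp_le (f : α → δ) (g : β → ε) (A : Ω → α) (B : Ω → β) (C : Ω → γ) :
    condMutInf μ (fun ω => f (A ω)) (fun ω => g (B ω)) C ≤ condMutInf μ A B C :=
  calc condMutInf μ (fun ω => f (A ω)) (fun ω => g (B ω)) C
      ≤ condMutInf μ A (fun ω => g (B ω)) C := condMutInf_comp_left_le μ f A _ C
    _ = condMutInf μ (fun ω => g (B ω)) A C := condMutInf_comm μ _ _ C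
    _ ≤ condMutInf μ B A C := condMutInf_comp_left_le μ g B A C
    _ = condMutInf μ A B C := condMutInf_comm μ B A C

lemma condMutInf_comp_eq_zero (f : α → δ) (g : β → ε) {A : Ω → α} {B : Ω → β} {C : Ω → γ}
    (h : condMutInf μ A B C = 0) :
    condMutInf μ (fun ω => f (A ω)) (fun ω => g (B ω)) C = 0 :=
  le_antisymm (h ▸ condMutInf_comp_le μ f g A B C) (condMutInf_nonneg μ _ _ C)

lemma condEnt_nonneg (A : Ω → α) (C : Ω → γ) : 0 ≤ condEnt μ A C := by
  have h := ent_comp_of_injective μ (f := fun x : α × γ => (x.1, x.1, x.2))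
    (by intro x y h; simp_all [Prod.ext_iff]) (fun ω => (A ω, C ω))
  have := condMutInf_nonneg μ A A C
  simp only [condMutInf] at this h
  rw [h] at this
  rw [condEnt]
  linarith

lemma condMutInf_le_condEnt (A : Ω → α) (B : Ω → β) (C : Ω → γ) :
    condMutInf μ A B C ≤ condEnt μ A C := by
  have := condEnt_nonneg μ A (fun ω => (B ω, C ω))
  simp only [condMutInf, condEnt] at this ⊢
  linarith

lemma condEnt_prod_comm (A : Ω → α) (B : Ω → β) (C : Ω → γ) :
    condEnt μ A (fun ω => (B ω, C ω)) = condEnt μ A (fun ω => (C ω, B ω)) := by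
  have h₁ := ent_comp_of_injective μ (f := fun x : α × β × γ => (x.1, x.2.2, x.2.1))
    (by intro x y h; simp_all [Prod.ext_iff]) (fun ω => (A ω, B ω, C ω))
  have h₂ := ent_comp_of_injective μ Prod.swap_injective (fun ω => (B ω, C ω))
  simp only [condEnt, Prod.swap] at h₁ h₂ ⊢
  rw [h₁, h₂]

lemma condMutInf_left_le_of_condEnt_eq_zero {A : Ω → α} {A' : Ω → δ} {C : Ω → γ}
    (hA : condEnt μ A' (fun ω => (A ω, C ω)) = 0) (B : Ω → β) :
    condMutInf μ A' B C ≤ condMutInf μ A B C := by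
  have hsplit := condMutInf_pair_left μ A' A B C
  have hdet := hA ▸ condMutInf_le_condEnt μ A' B (fun ω => (A ω, C ω))
  have hproj := condMutInf_comp_left_le μ Prod.fst (fun ω => (A' ω, A ω)) B C
  simp only at hproj
  linarith

lemma condMutInf_le_of_condEnt_eq_zero {A : Ω → α} {A' : Ω → δ} {B : Ω → β} {B' : Ω → ε}
    {C : Ω → γ} (hA : condEnt μ A' (fun ω => (A ω, C ω)) = 0)
    (hB : condEnt μ B' (fun ω => (B ω, C ω)) = 0) :
    condMutInf μ A' B' C ≤ condMutInf μ A B C :=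
  calc condMutInf μ A' B' C ≤ condMutInf μ A B' C := condMutInf_left_le_of_condEnt_eq_zero μ hA B'
    _ = condMutInf μ B' A C := condMutInf_comm μ A B' C
    _ ≤ condMutInf μ B A C := condMutInf_left_le_of_condEnt_eq_zero μ hB A
    _ = condMutInf μ A B C := condMutInf_comm μ B A C

lemma mutInf_add_condMutInf (A : Ω → α) (B : Ω → β) (C : Ω → γ) :
    mutInf μ A B + condMutInf μ A C B = mutInf μ A C + condMutInf μ A B C := by
  have h₁ := ent_comp_of_injective μ Prod.swap_injective (fun ω => (C ω, B ω))
  have h₂ := ent_comp_of_injective μ (f := fun x : α × γ × β => (x.1, x.2.2, x.2.1))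
    (by intro x y h; simp_all [Prod.ext_iff]) (fun ω => (A ω, C ω, B ω))
  simp only [mutInf, condMutInf, Prod.swap] at h₁ h₂ ⊢
  rw [← h₁, h₂]
  ring

lemma ent_comp_le (f : α → β) (A : Ω → α) : ent μ (fun ω => f (A ω)) ≤ ent μ A := by
  have h₁ := ent_comp_of_injective μ (f := fun a => (a, f a)) (fun x y h => congrArg Prod.fst h) A
  have := condEnt_nonneg μ A (fun ω => f (A ω))
  rw [condEnt, h₁] at this
  linarith

end Identities

section CommonInformation

variable {α β γ τ : Type} (μ : FinProb Ω)

/-- `condPr μ B A a b = P(B = b | A = a)`, and `0` when `P(A = a) = 0`. -/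
noncomputable def condPr (B : Ω → β) (A : Ω → α) (a : α) (b : β) : ℝ :=
  prEq μ (fun ω => (B ω, A ω)) (b, a) / prEq μ A a

lemma mul_prEq_eq_of_condPr_eq {B : Ω → β} {A : Ω → α} {a a' : α}
    (h : condPr μ B A a = condPr μ B A a') (b : β) :
    prEq μ (fun ω => (B ω, A ω)) (b, a) * prEq μ A a'
      = prEq μ (fun ω => (B ω, A ω)) (b, a') * prEq μ A a := by
  have hle a := prEq_le_prEq_comp μ Prod.snd (fun ω => (B ω, A ω)) (b, a)
  rcases (prEq_nonneg μ A a).eq_or_lt with ha | ha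
  · rw [← ha, le_antisymm (hle a |>.trans_eq ha.symm) (prEq_nonneg μ _ _)]; ring
  rcases (prEq_nonneg μ A a').eq_or_lt with ha' | ha'
  · rw [← ha', le_antisymm (hle a' |>.trans_eq ha'.symm) (prEq_nonneg μ _ _)]; ring
  have := congrFun h b
  rwa [condPr, condPr, div_eq_div_iff ha.ne' ha'.ne'] at this

lemma prEq_mul_prEq_comp_eq_of_condPr_eq [Fintype α] [Fintype β] {B : Ω → β} {A : Ω → α} (f : α → τ)
    (hf : ∀ a a', f a = f a' → condPr μ B A a = condPr μ B A a') (b : β) (a : α) :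
    prEq μ (fun ω => (B ω, A ω)) (b, a) * prEq μ (fun ω => f (A ω)) (f a)
      = prEq μ (fun ω => (B ω, f (A ω))) (b, f a) * prEq μ A a := by
  rw [prEq_comp_eq_sum μ f A, prEq_pair_comp_eq_sum μ f B A, Finset.mul_sum, Finset.sum_mul]
  refine Finset.sum_congr rfl fun a' _ => ?_
  split_ifs with h
  · exact mul_prEq_eq_of_condPr_eq μ (hf a a' h.symm) b
  · simp

variable [Fintype α] [Fintype β] [Fintype γ] [Fintype τ]

lemma condMutInf_comp_eq_zero_of_condPr_eq {B : Ω → β} {A : Ω → α} (f : α → τ)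
    (hf : ∀ a a', f a = f a' → condPr μ B A a = condPr μ B A a') :
    condMutInf μ B A (fun ω => f (A ω)) = 0 := by
  rw [condMutInf_eq_zero_iff]
  ext ⟨b, a, t⟩
  simp only [condIndepLaw]
  by_cases ht : f a = t
  · subst ht
    rw [prEq_congr μ (A := fun ω => (B ω, A ω, f (A ω))) (B := fun ω => (B ω, A ω))
        (b := (b, a)) fun ω => by grind,
      prEq_congr μ (A := fun ω => (A ω, f (A ω))) (B := A) (b := a) fun ω => by grind]
    rcases (prEq_nonneg μ (fun ω => f (A ω)) (f a)).eq_or_lt with h0 | hpos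
    · have ha : prEq μ A a = 0 := le_antisymm ((prEq_le_prEq_comp μ f A a).trans_eq h0.symm)
        (prEq_nonneg μ A a)
      rw [ha, mul_zero, zero_div]
      exact le_antisymm ((prEq_le_prEq_comp μ Prod.snd (fun ω => (B ω, A ω)) (b, a)).trans_eq ha)
        (prEq_nonneg μ _ _)
    rw [eq_div_iff hpos.ne']
    exact prEq_mul_prEq_comp_eq_of_condPr_eq μ f hf b a
  · rw [prEq_eq_zero μ (a := (b, a, t)) fun ω h => ht (by grind),
      prEq_eq_zero μ (a := (a, t)) fun ω h => ht (by grind), mul_zero, zero_div]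

lemma mutInf_le_ent_of_condPr_eq {A : Ω → α} {B : Ω → β} (f : α → τ)
    (hf : ∀ a a', f a = f a' → condPr μ B A a = condPr μ B A a') :
    mutInf μ A B ≤ ent μ (fun ω => f (A ω)) := by
  have h := condMutInf_comp_eq_zero_of_condPr_eq μ f hf
  have h₁ := ent_comp_of_injective μ (f := fun a => (a, f a))
    (fun x y h => congrArg Prod.fst h) A
  have h₂ := ent_comp_of_injective μ (f := fun x : β × α => (x.1, x.2, f x.2))
    (fun x y h => by simp_all [Prod.ext_iff]) (fun ω => (B ω, A ω))
  have h₃ := ent_comp_of_injective μ Prod.swap_injective (fun ω => (A ω, B ω))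
  have hB := ent_comp_le μ Prod.fst (fun ω => (B ω, f (A ω)))
  simp only [condMutInf, Prod.swap] at h h₁ h₂ h₃ hB
  rw [mutInf]
  linarith

lemma condPr_eq_of_condMutInf_eq_zero {W : Ω → β} {X : Ω → α} {Y : Ω → γ}
    (h₁ : condMutInf μ W Y X = 0) (h₂ : condMutInf μ W X Y = 0) {ω : Ω} (hω : 0 < μ.p ω) :
    condPr μ W X (X ω) = condPr μ W Y (Y ω) := by
  funext w
  have e₁ := congrFun ((condMutInf_eq_zero_iff μ W Y X).1 h₁) (w, Y ω, X ω)
  have e₂ := congrFun ((condMutInf_eq_zero_iff μ W X Y).1 h₂) (w, X ω, Y ω)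
  have hWYX : prEq μ (fun ω => (W ω, Y ω, X ω)) (w, Y ω, X ω)
      = prEq μ (fun ω => (W ω, X ω, Y ω)) (w, X ω, Y ω) :=
    prEq_congr μ fun ω' => by simp only [Prod.mk.injEq]; tauto
  have hYX : prEq μ (fun ω => (Y ω, X ω)) (Y ω, X ω) = prEq μ (fun ω => (X ω, Y ω)) (X ω, Y ω) :=
    prEq_congr μ fun ω' => by simp only [Prod.mk.injEq]; tauto
  have hXY := prEq_self_pos μ (fun ω => (X ω, Y ω)) hω
  have hX := prEq_self_pos μ X hω
  have hY := prEq_self_pos μ Y hω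
  simp only [condIndepLaw] at e₁ e₂
  rw [hWYX, hYX] at e₁
  rw [condPr, condPr, div_eq_div_iff hX.ne' hY.ne']
  field_simp at e₁ e₂
  apply mul_right_cancel₀ hXY.ne'
  linear_combination prEq μ X (X ω) * e₂ - prEq μ Y (Y ω) * e₁

lemma ent_le_gkInf {X : Ω → α} {Y : Ω → γ} (f : α → τ) (g : γ → τ)
    (hfg : ∀ ω, 0 < μ.p ω → f (X ω) = g (Y ω)) :
    ent μ (fun ω => f (X ω)) ≤ gkInf μ X Y := by
  let e := Fintype.equivFin τ
  refine le_csSup ⟨ent μ X, ?_⟩ ⟨_, fun a => e (f a), fun c => e (g c),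
    fun ω hω => congrArg e (hfg ω hω), (ent_comp_of_injective μ e.injective _).symm⟩
  rintro _ ⟨n, f', g', -, rfl⟩
  exact ent_comp_le μ f' X

lemma mutInf_le_gkInf {W : Ω → β} {X : Ω → α} {Y : Ω → γ}
    (h₁ : condMutInf μ W Y X = 0) (h₂ : condMutInf μ W X Y = 0) :
    mutInf μ X W ≤ gkInf μ X Y := by
  let S := Set.range (condPr μ W X) ∪ Set.range (condPr μ W Y)
  let f : α → S := fun x => ⟨condPr μ W X x, Or.inl ⟨x, rfl⟩⟩
  let g : γ → S := fun y => ⟨condPr μ W Y y, Or.inr ⟨y, rfl⟩⟩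
  calc mutInf μ X W ≤ ent μ (fun ω => f (X ω)) :=
        mutInf_le_ent_of_condPr_eq μ f fun a a' h => congrArg Subtype.val h
    _ ≤ gkInf μ X Y :=
        ent_le_gkInf μ f g fun ω hω => Subtype.ext (condPr_eq_of_condMutInf_eq_zero μ h₁ h₂ hω)

end CommonInformation

theorem shares_cmi_ge_resInf_general {𝒳₁ 𝒳₂ 𝒳₃ A B C : Type}
    [Fintype 𝒳₁] [Fintype 𝒳₂] [Fintype 𝒳₃] [Fintype A] [Fintype B] [Fintype C]
    (μ : FinProb Ω)
    (X1 : Ω → 𝒳₁) (X2 : Ω → 𝒳₂) (X3 : Ω → 𝒳₃)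
    (W12 : Ω → A) (W23 : Ω → B) (W31 : Ω → C)
    (hC1 : condEnt μ X1 (fun ω => (W12 ω, W31 ω)) = 0)
    (hC3 : condEnt μ X3 (fun ω => (W31 ω, W23 ω)) = 0)
    (hP1 : condMutInf μ (fun ω => (W12 ω, W31 ω)) (fun ω => (X2 ω, X3 ω)) X1 = 0)
    (hP3 : condMutInf μ (fun ω => (W31 ω, W23 ω)) (fun ω => (X1 ω, X2 ω)) X3 = 0) :
    condMutInf μ W12 W23 W31 ≥ resInf μ X1 X3 := by
  have hW31X3 : condMutInf μ W31 X3 X1 = 0 := (condMutInf_comp_eq_zero μ Prod.snd Prod.snd hP1 :)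
  have hW31X1 : condMutInf μ W31 X1 X3 = 0 := (condMutInf_comp_eq_zero μ Prod.fst Prod.fst hP3 :)
  have hshares : condMutInf μ X1 X3 W31 ≤ condMutInf μ W12 W23 W31 :=
    condMutInf_le_of_condEnt_eq_zero μ hC1 ((condEnt_prod_comm μ X3 W23 W31).trans hC3)
  have hsplit := mutInf_add_condMutInf μ X1 X3 W31
  have hcommon := mutInf_le_gkInf μ hW31X3 hW31X1
  rw [condMutInf_comm, hW31X1] at hsplit
  rw [ge_iff_le, resInf]
  linarith

/-- In any 3SS scheme (here expressed through the information-theoretic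
correctness and privacy conditions that hold for every secret distribution
supported on the domain), the shares satisfy `I(W₁₂;W₂₃|W₃₁) ≥ RI(X₁;X₃)`. -/
theorem shares_cmi_ge_resInf {𝒳₁ 𝒳₂ 𝒳₃ A B C : Type}
    [Fintype 𝒳₁] [Fintype 𝒳₂] [Fintype 𝒳₃] [Fintype A] [Fintype B] [Fintype C]
    (μ : FinProb Ω)
    (X1 : Ω → 𝒳₁) (X2 : Ω → 𝒳₂) (X3 : Ω → 𝒳₃)
    (W12 : Ω → A) (W23 : Ω → B) (W31 : Ω → C)
    (hC1 : condEnt μ X1 (fun ω => (W12 ω, W31 ω)) = 0)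
    (hC2 : condEnt μ X2 (fun ω => (W23 ω, W12 ω)) = 0)
    (hC3 : condEnt μ X3 (fun ω => (W31 ω, W23 ω)) = 0)
    (hP1 : condMutInf μ (fun ω => (W12 ω, W31 ω)) (fun ω => (X2 ω, X3 ω)) X1 = 0)
    (hP2 : condMutInf μ (fun ω => (W23 ω, W12 ω)) (fun ω => (X1 ω, X3 ω)) X2 = 0)
    (hP3 : condMutInf μ (fun ω => (W31 ω, W23 ω)) (fun ω => (X1 ω, X2 ω)) X3 = 0) :
    condMutInf μ W12 W23 W31 ≥ resInf μ X1 X3 :=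
  shares_cmi_ge_resInf_general μ X1 X2 X3 W12 W23 W31 hC1 hC3 hP1 hP3
end

section
/- In any 3SS scheme for the domain S = {000, 001, 010, 111}, if (a₁,b₁,c₁) ∈ M_{000}, then there exist pairwise distinct b₁, b₂, b₃ in the W₂₃-alphabet such that (a₁,b₂,c₁) ∈ M_{001} and (a₁,b₃,c₁) ∈ M_{010}, where M_x denotes the support of share triples on input x. -/
open scoped Classical

/-- The domain `S = {000, 001, 010, 111}`. -/
def S15 : Set (Bool × Bool × Bool) :=
  {(false, false, false), (false, false, true), (false, true, false), (true, true, true)}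


lemma exists_r_of_pos_sum {R : Type} [Fintype R] (f : R → ℝ)
    (h : 0 < ∑ r, f r) : ∃ r, 0 < f r := by
  by_contra hc
  push_neg at hc
  exact absurd (Finset.sum_nonpos fun r _ => hc r) (not_le.mpr h)

lemma mem_Msupp_iff {X A B C R : Type} [Fintype R] (sch : Scheme X A B C R)
    (x : X) (w : A × B × C) :
    w ∈ Msupp sch x ↔ ∃ r, 0 < sch.pR r ∧ sch.share x r = w := by
  constructor
  · intro h
    obtain ⟨r, hr⟩ := exists_r_of_pos_sum _ h
    by_cases he : sch.share x r = w
    · exact ⟨r, by simpa [he] using hr, he⟩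
    · rw [if_neg he] at hr; exact absurd hr (lt_irrefl 0)
  · rintro ⟨r, hr, he⟩
    show 0 < ∑ s, if sch.share x s = w then sch.pR s else 0
    refine Finset.sum_pos' (fun s _ => ?_) ⟨r, Finset.mem_univ r, ?_⟩
    · by_cases hs : sch.share x s = w <;> simp [hs, sch.nonneg s]
    · rw [if_pos he]; exact hr

lemma probV1_pos_of_mem {X A B C R : Type} [Fintype R] (sch : Scheme X A B C R)
    {x : X} {w : A × B × C} (h : w ∈ Msupp sch x) :
    0 < probV1 sch x (view1 w) := by
  obtain ⟨r, hr, he⟩ := (mem_Msupp_iff sch x w).mp h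
  show 0 < ∑ s, if view1 (sch.share x s) = view1 w then sch.pR s else 0
  refine Finset.sum_pos' (fun s _ => ?_) ⟨r, Finset.mem_univ r, ?_⟩
  · by_cases hs : view1 (sch.share x s) = view1 w <;> simp [hs, sch.nonneg s]
  · rw [if_pos (congrArg view1 he)]; exact hr

lemma exists_mid_of_probV1_pos {X A B C R : Type} [Fintype R] (sch : Scheme X A B C R)
    {x : X} {a : A} {c : C} (h : 0 < probV1 sch x (a, c)) :
    ∃ b, (a, b, c) ∈ Msupp sch x := by
  obtain ⟨r, hr⟩ := exists_r_of_pos_sum _ h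
  by_cases he : view1 (sch.share x r) = (a, c)
  · refine ⟨(sch.share x r).2.1, (mem_Msupp_iff sch x _).mpr ⟨r, by simpa [he] using hr, ?_⟩⟩
    have h1 : (sch.share x r).1 = a := congrArg Prod.fst he
    have h2 : (sch.share x r).2.2 = c := congrArg Prod.snd he
    exact Prod.ext h1 (Prod.ext rfl h2)
  · rw [if_neg he] at hr; exact absurd hr (lt_irrefl 0)

/-- In any 3SS scheme for `S = {000,001,010,111}`: if `(a₁,b₁,c₁) ∈ M_{000}`,
then there are pairwise distinct `b₁, b₂, b₃` with `(a₁,b₂,c₁) ∈ M_{001}` and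
`(a₁,b₃,c₁) ∈ M_{010}`. -/
theorem three_distinct_middle_shares {A B C R : Type} [Fintype R]
    (sch : Scheme (Bool × Bool × Bool) A B C R) (h3ss : Is3SS S15 sch)
    (a1 : A) (b1 : B) (c1 : C)
    (hmem : (a1, b1, c1) ∈ Msupp sch (false, false, false)) :
    ∃ b2 b3 : B, b1 ≠ b2 ∧ b1 ≠ b3 ∧ b2 ≠ b3 ∧
      (a1, b2, c1) ∈ Msupp sch (false, false, true) ∧
      (a1, b3, c1) ∈ Msupp sch (false, true, false) := by
  obtain ⟨⟨φ1, hφ1⟩, ⟨φ2, hφ2⟩, ⟨φ3, hφ3⟩, hpriv1, -, -⟩ := h3ss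
  have h000 : ((false,false,false) : Bool×Bool×Bool) ∈ S15 := by simp [S15]
  have h001 : ((false,false,true) : Bool×Bool×Bool) ∈ S15 := by simp [S15]
  have h010 : ((false,true,false) : Bool×Bool×Bool) ∈ S15 := by simp [S15]
  have hpos : 0 < probV1 sch (false,false,false) ((a1, c1) : A × C) :=
    probV1_pos_of_mem sch hmem
  have hpos2 : 0 < probV1 sch (false,false,true) (a1, c1) := by
    rw [← hpriv1 _ h000 _ h001 rfl]; exact hpos
  have hpos3 : 0 < probV1 sch (false,true,false) (a1, c1) := by
    rw [← hpriv1 _ h000 _ h010 rfl]; exact hpos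
  obtain ⟨b2, hb2⟩ := exists_mid_of_probV1_pos sch hpos2
  obtain ⟨b3, hb3⟩ := exists_mid_of_probV1_pos sch hpos3
  obtain ⟨r1, hr1, he1⟩ := (mem_Msupp_iff sch _ _).mp hmem
  obtain ⟨r2, hr2, he2⟩ := (mem_Msupp_iff sch _ _).mp hb2
  obtain ⟨r3, hr3, he3⟩ := (mem_Msupp_iff sch _ _).mp hb3
  have e31 := hφ3 _ h000 r1 hr1
  have e32 := hφ3 _ h001 r2 hr2
  have e21 := hφ2 _ h000 r1 hr1
  have e22 := hφ2 _ h001 r2 hr2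
  have e23 := hφ2 _ h010 r3 hr3
  rw [he1] at e31 e21
  rw [he2] at e32 e22
  rw [he3] at e23
  simp [view2, view3] at e31 e32 e21 e22 e23
  refine ⟨b2, b3, ?_, ?_, ?_, hb2, hb3⟩
  · intro h; rw [h] at e31; rw [e31] at e32; exact Bool.false_ne_true e32
  · intro h; rw [h] at e21; rw [e21] at e23; exact Bool.false_ne_true e23
  · intro h; rw [h] at e22; rw [e22] at e23; exact Bool.false_ne_true e23
end
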